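/- arXiv:2401.01681 — 2 statements merged into one kernel-verified Lean document; each statement's English description precedes it below -/
import Mathlib

section
/- If z is a vertex of S(n,k) (in bitstring form) whose cyclic block/gap structure has exactly p gaps (maximal cyclic runs of unmatched bits), then z is the first coordinate of exactly p connectors (z, y) and the second coordinate of exactly p connectors (x, z). -/
/-! A connector `(x, y)` at position `i` moves the one of `x` at `i` to the free position `i + 1`
and then rotates: `σ⁻¹ y = x ∘ swap i (i + 1)`, where `x` reads `0,1,0,0` on `i - 1, …, i + 2`.
For a vertex `z`, the connectors `(z, y)` therefore correspond to the ones `i` of `z` with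
`z (i + 2) = 0`, that is, to the gaps (which start at `i + 2`), and the connectors `(x, z)` to the
ones `t` of `z` with `z (t - 2) = 0`. The two counts agree because in a finite set `S` as many
`t ∈ S` have `t + 2 ∉ S` as have `t - 2 ∉ S`. -/

/-- Cyclic right shift of a bitstring of length `n` by one position: `σ(x)_i = x_{i-1}`. -/
def shift {n : ℕ} (x : ZMod n → Bool) : ZMod n → Bool := fun i => x (i - 1)

/-- Cyclic left shift, i.e. `σ⁻¹`: `σ⁻¹(x)_i = x_{i+1}`. -/
def unshift {n : ℕ} (x : ZMod n → Bool) : ZMod n → Bool := fun i => x (i + 1)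

/-- A vertex of the Schrijver graph `S(n,k)` in bitstring form: a binary string of length `n`
with exactly `k` ones and no two ones cyclically adjacent. -/
def IsSchrijverVertex (n k : ℕ) (x : ZMod n → Bool) : Prop :=
  Set.ncard {i : ZMod n | x i = true} = k ∧ ∀ i : ZMod n, x i = true → x (i + 1) = false

/-- Adjacency in the (Schrijver/Kneser) graph: the sets of 1-positions are disjoint
(and the strings are distinct). -/
def SAdj {n : ℕ} (x y : ZMod n → Bool) : Prop :=
  x ≠ y ∧ ∀ i : ZMod n, ¬(x i = true ∧ y i = true)

/-- The necklace of `x`: the set of all cyclic shifts of `x`. -/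
def neck {n : ℕ} (x : ZMod n → Bool) : Set (ZMod n → Bool) :=
  {y | ∃ i : ℕ, shift^[i] x = y}

/-- `(x, y)` is a connector with the glider push at position `i`: `x` and `σ⁻¹(y)` agree
outside the three cyclically consecutive positions `i, i+1, i+2`, where `x` reads `1,0,–`
(with `i+2` unmatched in `x`) and `σ⁻¹(y)` reads `–,1,0` (with `i` unmatched in `σ⁻¹(y)`). -/
def ConnAt {n : ℕ} (i : ZMod n) (x y : ZMod n → Bool) : Prop :=
  x i = true ∧ x (i + 1) = false ∧ x (i + 2) = false ∧
  unshift y i = false ∧ unshift y (i - 1) = false ∧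
  unshift y (i + 1) = true ∧ unshift y (i + 2) = false ∧
  ∀ j : ZMod n, j ≠ i → j ≠ i + 1 → j ≠ i + 2 → x j = unshift y j

/-- `(x,y)` is a connector (at some position). -/
def Conn {n : ℕ} (x y : ZMod n → Bool) : Prop := ∃ i : ZMod n, ConnAt i x y

section Swap

variable {R : Type*} [CommRing R] [DecidableEq R] {i : R}

lemma Equiv.swap_add_one_apply_sub_one (h1 : (1 : R) ≠ 0) (h2 : (2 : R) ≠ 0) :
    swap i (i + 1) (i - 1) = i - 1 :=
  swap_apply_of_ne_of_ne (fun h => h1 (by linear_combination -h))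
    (fun h => h2 (by linear_combination -h))

lemma Equiv.swap_add_one_apply_add_two (h1 : (1 : R) ≠ 0) (h2 : (2 : R) ≠ 0) :
    swap i (i + 1) (i + 2) = i + 2 :=
  swap_apply_of_ne_of_ne (fun h => h2 (by linear_combination h))
    (fun h => h1 (by linear_combination h))

end Swap

lemma Equiv.eq_comp_swap_iff {α β : Type*} [DecidableEq α] {v w : α → β} {a b : α} :
    w = v ∘ swap a b ↔ v = w ∘ swap a b := by
  constructor <;> rintro rfl <;> funext j <;> simp

lemma Equiv.injOn_comp_swap_add_one {R α : Type*} [Add R] [One R] [DecidableEq R]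
    (w : R → α) (c : α) :
    Set.InjOn (fun i => w ∘ swap i (i + 1)) {i | w i = c ∧ w (i + 1) ≠ c} := by
  intro a ⟨ha, ha1⟩ b ⟨hb, _⟩ hab
  by_contra hne
  have hwa := congrFun hab a
  simp only [Function.comp_apply, swap_apply_left] at hwa
  rw [swap_apply_def, if_neg hne] at hwa
  split_ifs at hwa <;> simp_all

lemma Set.ncard_setOf_comp_perm {α : Type*} (z : α → Bool) (e : Equiv.Perm α) :
    {j | z (e j) = true}.ncard = {j | z j = true}.ncard :=
  ncard_preimage_of_injective_subset_range (s := {j | z j = true}) e.injective (by simp)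

lemma Set.ncard_sdiff_preimage_add_eq_sub {G : Type*} [AddGroup G] {S : Set G} (hS : S.Finite)
    (a : G) : (S \ (· + a) ⁻¹' S).ncard = (S \ (· - a) ⁻¹' S).ncard := by
  have hpairs : (· + a) '' (S ∩ (· + a) ⁻¹' S) = S ∩ (· - a) ⁻¹' S := by
    ext t
    constructor
    · rintro ⟨s, ⟨hs, hsa⟩, rfl⟩
      exact ⟨hsa, by simpa using hs⟩
    · rintro ⟨ht, hta⟩
      exact ⟨t - a, ⟨hta, by simpa using ht⟩, sub_add_cancel t a⟩
  have hcard := ncard_image_of_injective (S ∩ (· + a) ⁻¹' S) (add_left_injective a)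
  have h₁ := ncard_inter_add_ncard_sdiff_eq_ncard S ((· + a) ⁻¹' S) hS
  have h₂ := ncard_inter_add_ncard_sdiff_eq_ncard S ((· - a) ⁻¹' S) hS
  rw [hpairs] at hcard
  omega

section

variable {n k : ℕ} {x y z : ZMod n → Bool} {i : ZMod n}

def NoAdjacentOnes (z : ZMod n → Bool) : Prop := ∀ i, z i = true → z (i + 1) = false

lemma NoAdjacentOnes.pred_eq_false (hz : NoAdjacentOnes z) (hi : z i = true) :
    z (i - 1) = false := by
  by_contra h
  simpa [hi] using hz (i - 1) (by simpa using h)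

lemma IsSchrijverVertex.noAdjacentOnes (hz : IsSchrijverVertex n k z) : NoAdjacentOnes z := hz.2

lemma unshift_shift : unshift (shift z) = z := by
  funext j; simp [shift, unshift]

lemma shift_unshift : shift (unshift z) = z := by
  funext j; simp [shift, unshift]

lemma IsSchrijverVertex.shift (hz : IsSchrijverVertex n k z) : IsSchrijverVertex n k (shift z) :=
  ⟨(Set.ncard_setOf_comp_perm z (Equiv.subRight 1)).trans hz.1,
    fun j hj => by simpa [_root_.shift] using hz.2 (j - 1) hj⟩

lemma IsSchrijverVertex.unshift (hz : IsSchrijverVertex n k z) :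
    IsSchrijverVertex n k (unshift z) :=
  ⟨(Set.ncard_setOf_comp_perm z (Equiv.addRight 1)).trans hz.1, fun j hj => hz.2 (j + 1) hj⟩

lemma IsSchrijverVertex.comp_swap (hz : IsSchrijverVertex n k z) (hm : z (i - 1) = false)
    (h2 : z (i + 2) = false) : IsSchrijverVertex n k (z ∘ Equiv.swap i (i + 1)) := by
  refine ⟨(Set.ncard_setOf_comp_perm z _).trans hz.1, fun j hj => ?_⟩
  simp only [Function.comp_apply, Equiv.swap_apply_def] at hj ⊢
  grind [hz.2]

lemma connAt_iff :
    ConnAt i x y ↔ x (i - 1) = false ∧ x i = true ∧ x (i + 1) = false ∧ x (i + 2) = false ∧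
      unshift y = x ∘ Equiv.swap i (i + 1) := by
  constructor
  · rintro ⟨h0, h1, h2, h3, h4, h5, h6, h7⟩
    have h10 : (1 : ZMod n) ≠ 0 := fun h => by simp [h, h0] at h1
    have h20 : (2 : ZMod n) ≠ 0 := fun h => by simp [h, h0] at h2
    have hy : unshift y = x ∘ Equiv.swap i (i + 1) := by
      funext j
      by_cases hj0 : j = i
      · subst hj0; simp [h1, h3]
      by_cases hj1 : j = i + 1
      · subst hj1; simp [h0, h5]
      rw [Function.comp_apply, Equiv.swap_apply_of_ne_of_ne hj0 hj1]
      by_cases hj2 : j = i + 2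
      · subst hj2; rw [h2, h6]
      · exact (h7 j hj0 hj1 hj2).symm
    refine ⟨?_, h0, h1, h2, hy⟩
    rw [← h4, hy, Function.comp_apply, Equiv.swap_add_one_apply_sub_one h10 h20]
  · rintro ⟨hm, h0, h1, h2, hy⟩
    have h10 : (1 : ZMod n) ≠ 0 := fun h => by simp [h, h0] at h1
    have h20 : (2 : ZMod n) ≠ 0 := fun h => by simp [h, h0] at h2
    simp only [ConnAt, hy, Function.comp_apply, Equiv.swap_apply_left, Equiv.swap_apply_right,
      Equiv.swap_add_one_apply_sub_one h10 h20, Equiv.swap_add_one_apply_add_two h10 h20,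
      h0, h1, h2, hm, true_and]
    intro j hj0 hj1 _
    rw [Equiv.swap_apply_of_ne_of_ne hj0 hj1]

lemma connAt_iff_unshift :
    ConnAt i x y ↔ unshift y (i - 1) = false ∧ unshift y i = false ∧ unshift y (i + 1) = true ∧
      unshift y (i + 2) = false ∧ x = unshift y ∘ Equiv.swap i (i + 1) := by
  rw [connAt_iff, Equiv.eq_comp_swap_iff]
  constructor
  · rintro ⟨hm, h0, h1, h2, hy⟩
    have h10 : (1 : ZMod n) ≠ 0 := fun h => by simp [h, h0] at h1
    have h20 : (2 : ZMod n) ≠ 0 := fun h => by simp [h, h0] at h2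
    subst hy
    simp only [Function.comp_apply, Equiv.swap_apply_left, Equiv.swap_apply_right,
      Equiv.swap_add_one_apply_sub_one h10 h20, Equiv.swap_add_one_apply_add_two h10 h20]
      at hm h0 h1 h2
    exact ⟨hm, h1, h0, h2, rfl⟩
  · rintro ⟨hm, h0, h1, h2, rfl⟩
    have h10 : (1 : ZMod n) ≠ 0 := fun h => by simp [h, h0] at h1
    have h20 : (2 : ZMod n) ≠ 0 := fun h => by
      simp [show i + 1 = i - 1 by linear_combination h, hm] at h1
    simp only [Function.comp_apply, Equiv.swap_apply_left, Equiv.swap_apply_right,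
      Equiv.swap_add_one_apply_sub_one h10 h20, Equiv.swap_add_one_apply_add_two h10 h20]
    exact ⟨hm, h1, h0, h2, trivial⟩

lemma shift_injective : Function.Injective (shift : (ZMod n → Bool) → ZMod n → Bool) :=
  Function.LeftInverse.injective fun _ => unshift_shift

lemma unshift_apply_sub_one : unshift z (i - 1) = z i := by
  simp [unshift]

lemma unshift_apply_add_one : unshift z (i + 1) = z (i + 2) := by
  simp [unshift, add_assoc, one_add_one_eq_two]

lemma setOf_conn_right_eq_image (hz : IsSchrijverVertex n k z) :
    {y | IsSchrijverVertex n k y ∧ Conn z y} =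
      (fun i => shift (z ∘ Equiv.swap i (i + 1))) '' {i | z i = true ∧ z (i + 2) = false} := by
  ext y
  constructor
  · rintro ⟨-, i, hi⟩
    obtain ⟨-, h0, -, h2, hy⟩ := connAt_iff.1 hi
    exact ⟨i, ⟨h0, h2⟩, by simp only [← hy, shift_unshift]⟩
  · rintro ⟨i, ⟨h0, h2⟩, rfl⟩
    have hm := hz.noAdjacentOnes.pred_eq_false h0
    exact ⟨(hz.comp_swap hm h2).shift,
      i, connAt_iff.2 ⟨hm, h0, hz.2 i h0, h2, unshift_shift⟩⟩

lemma setOf_conn_left_eq_image (hz : IsSchrijverVertex n k z) :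
    {x | IsSchrijverVertex n k x ∧ Conn x z} =
      (fun i => unshift z ∘ Equiv.swap i (i + 1)) ''
        {i | z i = false ∧ z (i + 1) = false ∧ z (i + 2) = true} := by
  ext x
  constructor
  · rintro ⟨-, i, hi⟩
    obtain ⟨hm, h0, h1, -, rfl⟩ := connAt_iff_unshift.1 hi
    rw [unshift_apply_sub_one] at hm
    rw [unshift_apply_add_one] at h1
    exact ⟨i, ⟨hm, h0, h1⟩, rfl⟩
  · rintro ⟨i, ⟨h0, h1, h2⟩, rfl⟩
    have h3 : unshift z (i + 2) = false := hz.2 (i + 2) h2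
    have hm : unshift z (i - 1) = false := by rwa [unshift_apply_sub_one]
    refine ⟨hz.unshift.comp_swap hm h3, i, connAt_iff_unshift.2 ⟨hm, h1, ?_, h3, rfl⟩⟩
    rwa [unshift_apply_add_one]

lemma ncard_setOf_conn_right (hz : IsSchrijverVertex n k z) :
    {y | IsSchrijverVertex n k y ∧ Conn z y}.ncard =
      {i | z i = true ∧ z (i + 2) = false}.ncard := by
  rw [setOf_conn_right_eq_image hz, Set.InjOn.ncard_image]
  refine shift_injective.comp_injOn ((Equiv.injOn_comp_swap_add_one z true).mono ?_)
  rintro i ⟨h0, -⟩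
  exact ⟨h0, by simp [hz.2 i h0]⟩

lemma ncard_setOf_conn_left (hz : IsSchrijverVertex n k z) :
    {x | IsSchrijverVertex n k x ∧ Conn x z}.ncard =
      {i | z i = false ∧ z (i + 1) = false ∧ z (i + 2) = true}.ncard := by
  rw [setOf_conn_left_eq_image hz, Set.InjOn.ncard_image]
  refine (Equiv.injOn_comp_swap_add_one (unshift z) false).mono ?_
  rintro i ⟨-, h1, h2⟩
  exact ⟨h1, by simp [unshift_apply_add_one, h2]⟩

lemma NoAdjacentOnes.setOf_gapStart_eq (hz : NoAdjacentOnes z) :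
    {i | ¬(z i = true ∨ z (i - 1) = true) ∧ (z (i - 1) = true ∨ z (i - 2) = true)} =
      (· + 2) '' {i | z i = true ∧ z (i + 2) = false} := by
  ext j
  simp only [Set.mem_ofPred_eq, Set.mem_image, not_or, Bool.not_eq_true]
  constructor
  · rintro ⟨⟨hj, hj1⟩, hor⟩
    have hj2 : z (j - 2) = true := hor.resolve_left (by simp [hj1])
    exact ⟨j - 2, ⟨hj2, by simpa using hj⟩, sub_add_cancel j 2⟩
  · rintro ⟨t, ⟨ht, ht2⟩, rfl⟩
    have ht1 : z (t + 2 - 1) = false := by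
      rw [show t + 2 - 1 = t + 1 by ring]; exact hz t ht
    exact ⟨⟨ht2, ht1⟩, Or.inr (by simpa using ht)⟩

lemma NoAdjacentOnes.ncard_gap_one_eq_ncard_one_gap (hz : NoAdjacentOnes z)
    (hfin : {i | z i = true}.Finite) :
    {i | z i = false ∧ z (i + 1) = false ∧ z (i + 2) = true}.ncard =
      {i | z i = true ∧ z (i + 2) = false}.ncard := by
  set S := {i | z i = true}
  have hright : {i | z i = true ∧ z (i + 2) = false} = S \ (· + 2) ⁻¹' S := by
    ext; simp [S]
  have hleft : (· + 2) '' {i | z i = false ∧ z (i + 1) = false ∧ z (i + 2) = true} =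
      S \ (· - 2) ⁻¹' S := by
    ext t
    simp only [Set.mem_image, Set.mem_sdiff, Set.mem_preimage, Set.mem_ofPred_eq, S,
      Bool.not_eq_true]
    constructor
    · rintro ⟨i, ⟨h0, -, h2⟩, rfl⟩
      exact ⟨h2, by simpa using h0⟩
    · rintro ⟨ht, ht2⟩
      refine ⟨t - 2, ⟨ht2, ?_, by simpa using ht⟩, sub_add_cancel t 2⟩
      rw [show t - 2 + 1 = t - 1 by ring]
      exact hz.pred_eq_false ht
  rw [← Set.ncard_image_of_injective _ (add_left_injective 2), hleft, hright,
    Set.ncard_sdiff_preimage_add_eq_sub hfin]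

end

theorem connector_count_eq_gap_count_general (n k : ℕ) (hk : 1 ≤ k)
    (z : ZMod n → Bool) (hz : IsSchrijverVertex n k z) (p : ℕ)
    (hp : Set.ncard {i : ZMod n |
        ¬(z i = true ∨ z (i - 1) = true) ∧ (z (i - 1) = true ∨ z (i - 2) = true)} = p) :
    Set.ncard {y : ZMod n → Bool | IsSchrijverVertex n k y ∧ Conn z y} = p ∧
    Set.ncard {x : ZMod n → Bool | IsSchrijverVertex n k x ∧ Conn x z} = p := by
  -- `ZMod 0 = ℤ`, and `ncard` is `0` on infinite sets: finiteness comes from `k ≥ 1`.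
  have hfin : {i | z i = true}.Finite := Set.finite_of_ncard_pos (hz.1 ▸ hk)
  have hgaps : {i | z i = true ∧ z (i + 2) = false}.ncard = p := by
    rw [← hp, hz.noAdjacentOnes.setOf_gapStart_eq,
      Set.ncard_image_of_injective _ (add_left_injective 2)]
  rw [ncard_setOf_conn_right hz, ncard_setOf_conn_left hz,
    hz.noAdjacentOnes.ncard_gap_one_eq_ncard_one_gap hfin, hgaps]
  exact ⟨rfl, rfl⟩

/-- if a vertex `z` of `S(n,k)` has exactly `p` gaps (maximal cyclic runs of
unmatched positions, a position `i` being matched if `z_i = 1` or `z_{i-1} = 1`), then `z`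
is the first coordinate of exactly `p` connectors `(z,y)` and the second coordinate of
exactly `p` connectors `(x,z)`. -/
theorem connector_count_eq_gap_count (n k : ℕ) (hk : 1 ≤ k) (hn : 2 * k + 1 ≤ n)
    (z : ZMod n → Bool) (hz : IsSchrijverVertex n k z) (p : ℕ)
    (hp : Set.ncard {i : ZMod n |
        ¬(z i = true ∨ z (i - 1) = true) ∧ (z (i - 1) = true ∨ z (i - 2) = true)} = p) :
    Set.ncard {y : ZMod n → Bool | IsSchrijverVertex n k y ∧ Conn z y} = p ∧
    Set.ncard {x : ZMod n → Bool | IsSchrijverVertex n k x ∧ Conn x z} = p :=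
  connector_count_eq_gap_count_general n k hk z hz p hp
end

section
/- For a connectable vertex x of S(n,k) with at least two blocks and its unique connector partner y in U_p, the vertex τ(y) defined by the case distinction (σ^{−2}(y) if γ' > 1; σ(y) if γ' = 1 and β > 2; σ^{γ+1}(y) if γ' = 1 and β = 2) is again connectable, and the block-gap profile P(τ(y)) is lexicographically strictly smaller than P(x). -/
/-- Position `i` is matched in `x` iff `x_i = 1` or `x_{i-1} = 1`. -/
def matchedB {n : ℕ} (x : ZMod n → Bool) (i : ZMod n) : Bool := x i || x (i - 1)

/-- Run-length encoding of a list of booleans. -/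
def rle : List Bool → List (Bool × ℕ)
  | [] => []
  | b :: l =>
    match rle l with
    | [] => [(b, 1)]
    | (c, m) :: t => if b = c then (c, m + 1) :: t else (b, 1) :: (c, m) :: t

/-- The profile `L(x,q) = L(σ^{-q}(x))`: the lengths of blocks (runs of matched positions,
recorded with a negative sign) and gaps (runs of unmatched positions) of the string
`σ^{-q}(x)` read from right to left; position `j ∈ {1,…,n}` of `σ^{-q}(x)` is matched in
`σ^{-q}(x)` iff position `j + q` is matched in `x`. -/
def profileFrom (n : ℕ) (x : ZMod n → Bool) (q : ZMod n) : List ℤ :=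
  ((rle (List.ofFn fun i : Fin n =>
      matchedB x (((i : ℕ) : ZMod n) + 1 + q))).map
    fun bm => if bm.1 then -(bm.2 : ℤ) else (bm.2 : ℤ)).reverse

/-- `γ'`: the length of the gap immediately to the right of position `p+1` in `x`
(for a connectable `x`, positions `p+2, …, p+1+γ'` are unmatched and `p+2+γ'` is matched). -/
noncomputable def gapR (n : ℕ) (x : ZMod n → Bool) (p : ZMod n) : ℕ :=
  sInf {t : ℕ | matchedB x (p + 2 + (t : ZMod n)) = true}

/-- `β'`: the length of the block immediately to the right of that gap. -/
noncomputable def blkR (n : ℕ) (x : ZMod n → Bool) (p : ZMod n) : ℕ :=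
  sInf {t : ℕ | matchedB x (p + 2 + (gapR n x p : ZMod n) + (t : ZMod n)) = false}

/-- `P(x) = L(x, p+1+γ'+β')`: the block/gap profile of a connectable vertex `x`, read from
right to left starting at the first block strictly to the right of position `p+1`. -/
noncomputable def Pprof (n : ℕ) (x : ZMod n → Bool) (p : ZMod n) : List ℤ :=
  profileFrom n x (p + 1 + (gapR n x p : ZMod n) + (blkR n x p : ZMod n))


theorem rle_cons_of_eq {l : List Bool} {c : Bool} {m : ℕ} {t : List (Bool × ℕ)}
    (h : rle l = (c, m) :: t) (b : Bool) :
    rle (b :: l) = if b = c then (c, m + 1) :: t else (b, 1) :: (c, m) :: t := by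
  simp only [rle, h]

theorem rle_cons (b : Bool) (l : List Bool) : ∃ m t, rle (b :: l) = (b, m) :: t := by
  rcases h : rle l with _ | ⟨⟨c, m⟩, t⟩
  · exact ⟨1, [], by simp [rle, h]⟩
  · by_cases hbc : b = c
    · exact ⟨m + 1, t, by subst hbc; rw [rle_cons_of_eq h, if_pos rfl]⟩
    · exact ⟨1, (c, m) :: t, by rw [rle_cons_of_eq h, if_neg hbc]⟩

theorem rle_replicate (c : Bool) {m : ℕ} (hm : m ≠ 0) : rle (List.replicate m c) = [(c, m)] := by
  induction m with
  | zero => exact absurd rfl hm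
  | succ m ih =>
    rcases m with _ | m
    · rfl
    · rw [List.replicate_succ, rle_cons_of_eq (ih m.succ_ne_zero), if_pos rfl]

theorem rle_append_replicate {l : List Bool} {c : Bool} {m : ℕ} (hl : l.getLast? ≠ some c)
    (hm : m ≠ 0) : rle (l ++ List.replicate m c) = rle l ++ [(c, m)] := by
  induction l with
  | nil => exact rle_replicate c hm
  | cons b l ih =>
    rcases l with _ | ⟨b', l⟩
    · have hbc : b ≠ c := by simpa using hl
      simp only [List.cons_append, List.nil_append]
      rw [rle_cons_of_eq (rle_replicate c hm), if_neg hbc]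
      rfl
    · obtain ⟨k, t, hdt⟩ := rle_cons b' l
      rw [List.getLast?_cons_cons] at hl
      have ih' := ih hl
      rw [hdt] at ih'
      rw [List.cons_append, rle_cons_of_eq ih', rle_cons_of_eq hdt]
      split_ifs <;> rfl

theorem map_range_add_eq_append_replicate {f : ℕ → Bool} {m c : ℕ} {v : Bool}
    (h : ∀ t < c, f (m + t) = v) :
    (List.range (m + c)).map f = (List.range m).map f ++ List.replicate c v := by
  rw [List.range_add, List.map_append, List.map_map]
  congr 1
  exact List.eq_replicate_iff.2 ⟨by simp, by simpa using h⟩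

theorem rle_map_range_succ_add {f : ℕ → Bool} {m c : ℕ} {v : Bool} (hc : c ≠ 0)
    (hm : f m ≠ v) (h : ∀ t < c, f (m + 1 + t) = v) :
    rle ((List.range (m + 1 + c)).map f) = rle ((List.range (m + 1)).map f) ++ [(v, c)] := by
  rw [map_range_add_eq_append_replicate h, rle_append_replicate _ hc]
  simpa [List.range_succ] using hm

theorem profileFrom_eq_map_range {n : ℕ} (x : ZMod n → Bool) (q : ZMod n) :
    profileFrom n x q = ((rle ((List.range n).map fun i : ℕ => matchedB x (i + 1 + q))).map
      fun bm => if bm.1 then -(bm.2 : ℤ) else (bm.2 : ℤ)).reverse := by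
  rw [profileFrom, List.ofFn_eq_map, ← List.map_coe_finRange_eq_range, List.map_map]
  rfl

section Profile

variable {n : ℕ} {x : ZMod n → Bool} {q s : ZMod n} {a b : ℕ}

theorem profileFrom_eq_neg_cons (hb : b ≠ 0) (hbn : b < n) (hq : q + 1 = s + b)
    (hblk : ∀ t < b, matchedB x (s + t) = true) (hprev : matchedB x (s - 1) = false) :
    ∃ r, profileFrom n x q = -(b : ℤ) :: r := by
  obtain ⟨m, hnm⟩ : ∃ m, n = m + 1 + b := ⟨n - b - 1, by omega⟩
  have hn : ((m + 1 + b : ℕ) : ZMod n) = 0 := hnm ▸ ZMod.natCast_self n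
  push_cast at hn
  rw [profileFrom_eq_map_range, congrArg List.range hnm, rle_map_range_succ_add (v := true) hb]
  · simp
  · rw [show (m : ZMod n) + 1 + q = s - 1 by linear_combination hn + hq, hprev]
    decide
  · intro t ht
    rw [show ((m + 1 + t : ℕ) : ZMod n) + 1 + q = s + t by push_cast; linear_combination hn + hq]
    exact hblk t ht

theorem profileFrom_eq_neg_cons_cons (ha : a ≠ 0) (hb : b ≠ 0) (habn : a + b < n)
    (hq : q + 1 = s + a + b) (hgap : ∀ t < a, matchedB x (s + t) = false)
    (hblk : ∀ t < b, matchedB x (s + a + t) = true) (hprev : matchedB x (s - 1) = true) :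
    ∃ r, profileFrom n x q = -(b : ℤ) :: (a : ℤ) :: r := by
  obtain ⟨a, rfl⟩ := Nat.exists_eq_succ_of_ne_zero ha
  obtain ⟨m, hnm⟩ : ∃ m, n = m + 1 + a + 1 + b := ⟨n - a - b - 2, by omega⟩
  have hn : ((m + 1 + a + 1 + b : ℕ) : ZMod n) = 0 := hnm ▸ ZMod.natCast_self n
  push_cast at hn hq hblk
  rw [profileFrom_eq_map_range, congrArg List.range hnm, rle_map_range_succ_add (v := true) hb,
    show m + 1 + a + 1 = m + 1 + (a + 1) by ring, rle_map_range_succ_add (v := false) ha]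
  · simp
  · rw [show (m : ZMod n) + 1 + q = s - 1 by linear_combination hn + hq, hprev]
    decide
  · intro t ht
    rw [show ((m + 1 + t : ℕ) : ZMod n) + 1 + q = s + t by push_cast; linear_combination hn + hq]
    exact hgap t ht
  · rw [show ((m + 1 + a : ℕ) : ZMod n) + 1 + q = s + a by push_cast; linear_combination hn + hq,
      hgap a (by omega)]
    simp
  · intro t ht
    rw [show ((m + 1 + a + 1 + t : ℕ) : ZMod n) + 1 + q = s + (a + 1) + t by
      push_cast; linear_combination hn + hq]
    exact hblk t ht

end Profile

section Positions

variable {n : ℕ}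

theorem ne_of_eq_add_natCast {i j : ZMod n} {c : ℕ} (hc : c ≠ 0) (hcn : c < n) (h : i = j + c) :
    i ≠ j := by
  rintro rfl
  have : (c : ZMod n) = 0 := by simpa using h
  exact hc (Nat.eq_zero_of_dvd_of_lt ((ZMod.natCast_eq_zero_iff c n).1 this) hcn)

theorem natCast_eq_neg_of_add_eq {c d : ℕ} (h : c + d = n) : (c : ZMod n) = -d := by
  rw [eq_neg_iff_add_eq_zero, ← Nat.cast_add, h, ZMod.natCast_self]

theorem exists_lt_add_natCast_eq [NeZero n] (i j : ZMod n) : ∃ t < n, i + t = j :=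
  ⟨(j - i).val, ZMod.val_lt _, by simp⟩

end Positions

section Runs

variable {n : ℕ} {x : ZMod n → Bool} {p : ZMod n} {g b : ℕ}

theorem gapR_eq (hgap : ∀ t < g, matchedB x (p + 2 + t) = false)
    (hend : matchedB x (p + 2 + g) = true) : gapR n x p = g :=
  le_antisymm (Nat.sInf_le hend) <| le_csInf ⟨g, hend⟩ fun t ht =>
    not_lt.1 fun h => by simp [hgap t h] at ht

theorem blkR_eq (hg : gapR n x p = g) (hblk : ∀ t < b, matchedB x (p + 2 + g + t) = true)
    (hend : matchedB x (p + 2 + g + b) = false) : blkR n x p = b := by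
  unfold blkR
  rw [hg]
  exact le_antisymm (Nat.sInf_le hend) <| le_csInf ⟨b, hend⟩ fun t ht =>
    not_lt.1 fun h => by simp [hblk t h] at ht

theorem gapR_spec [NeZero n] (hprev : matchedB x (p + 1) = true) (hg : gapR n x p = g) :
    (∀ t < g, matchedB x (p + 2 + t) = false) ∧ matchedB x (p + 2 + g) = true := by
  obtain ⟨t, -, ht⟩ := exists_lt_add_natCast_eq (p + 2) (p + 1)
  have hne : {t : ℕ | matchedB x (p + 2 + t) = true}.Nonempty := ⟨t, by simp [ht, hprev]⟩
  subst hg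
  exact ⟨fun t ht => by simpa using Nat.notMem_of_lt_sInf ht, Nat.sInf_mem hne⟩

theorem blkR_spec [NeZero n] (hp2 : matchedB x (p + 2) = false) (hg : gapR n x p = g)
    (hb : blkR n x p = b) :
    (∀ t < b, matchedB x (p + 2 + g + t) = true) ∧ matchedB x (p + 2 + g + b) = false := by
  obtain ⟨t, -, ht⟩ := exists_lt_add_natCast_eq (p + 2 + (g : ZMod n)) (p + 2)
  have hne : {t : ℕ | matchedB x (p + 2 + g + t) = false}.Nonempty := ⟨t, by simp [ht, hp2]⟩
  rw [← hb, blkR, hg]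
  exact ⟨fun t ht => by simpa using Nat.notMem_of_lt_sInf ht, Nat.sInf_mem hne⟩

theorem Pprof_eq_neg_cons (hb : b ≠ 0) (hbn : b < n)
    (hgap : ∀ t < g, matchedB x (p + 2 + t) = false)
    (hblk : ∀ t < b, matchedB x (p + 2 + g + t) = true)
    (hend : matchedB x (p + 2 + g + b) = false) (hprev : matchedB x (p + 1 + g) = false) :
    ∃ r, Pprof n x p = -(b : ℤ) :: r := by
  have hgR := gapR_eq hgap (by simpa using hblk 0 (Nat.pos_of_ne_zero hb))
  rw [Pprof, hgR, blkR_eq hgR hblk hend]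
  exact profileFrom_eq_neg_cons hb hbn (by ring) hblk
    (by rwa [show p + 2 + (g : ZMod n) - 1 = p + 1 + g by ring])

theorem Pprof_eq_neg_cons_cons (hg : g ≠ 0) (hb : b ≠ 0) (hgb : g + b < n)
    (hgap : ∀ t < g, matchedB x (p + 2 + t) = false)
    (hblk : ∀ t < b, matchedB x (p + 2 + g + t) = true)
    (hend : matchedB x (p + 2 + g + b) = false) (hprev : matchedB x (p + 1) = true) :
    ∃ r, Pprof n x p = -(b : ℤ) :: (g : ℤ) :: r := by
  have hgR := gapR_eq hgap (by simpa using hblk 0 (Nat.pos_of_ne_zero hb))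
  rw [Pprof, hgR, blkR_eq hgR hblk hend]
  exact profileFrom_eq_neg_cons_cons hg hb hgb (by ring) hgap hblk
    (by rwa [show p + 2 - 1 = p + 1 by ring])

end Runs

section Rotation

variable {n : ℕ}

theorem shift_iterate_apply (c : ℕ) (w : ZMod n → Bool) (i : ZMod n) :
    shift^[c] w i = w (i - c) := by
  induction c generalizing i with
  | zero => simp
  | succ c ih =>
    rw [Function.iterate_succ_apply', shift, ih]
    congr 1
    push_cast
    ring

theorem shift_iterate_eq_comp_add (c : ℕ) (w : ZMod n → Bool) :
    shift^[c] w = fun i => unshift w (i + -((c + 1 : ℕ) : ZMod n)) := by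
  funext i
  rw [shift_iterate_apply, unshift]
  congr 1
  push_cast
  ring

theorem matchedB_comp_add (z : ZMod n → Bool) (d i : ZMod n) :
    matchedB (fun j => z (j + d)) i = matchedB z (i + d) := by
  simp only [matchedB, sub_add_eq_add_sub]

theorem profileFrom_comp_add (z : ZMod n → Bool) (d q : ZMod n) :
    profileFrom n (fun j => z (j + d)) q = profileFrom n z (q + d) := by
  simp only [profileFrom, matchedB_comp_add, add_assoc]

theorem Pprof_comp_add (z : ZMod n → Bool) (d p : ZMod n) :
    Pprof n (fun j => z (j + d)) p = Pprof n z (p + d) := by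
  have hg : gapR n (fun j => z (j + d)) p = gapR n z (p + d) := by
    simp only [gapR, matchedB_comp_add, add_right_comm _ d]
  have hb : blkR n (fun j => z (j + d)) p = blkR n z (p + d) := by
    simp only [blkR, hg, matchedB_comp_add, add_right_comm _ d]
  rw [Pprof, Pprof, profileFrom_comp_add, hg, hb]
  congr 1
  ring

end Rotation

section BlockStarts

variable {n : ℕ} [NeZero n]

theorem ncard_blockStarts_le_one {M : ZMod n → Bool} {s : ZMod n} {a b : ℕ} (hab : a + b = n)
    (hgap : ∀ t < a, M (s + t) = false) (hblk : ∀ t < b, M (s + a + t) = true) :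
    {i | M i = true ∧ M (i - 1) = false}.ncard ≤ 1 := by
  refine (Set.ncard_le_ncard (t := {s + a}) ?_ (Set.finite_singleton _)).trans
    (Set.ncard_singleton _).le
  rintro i ⟨hi, hi1⟩
  obtain ⟨t, ht, rfl⟩ := exists_lt_add_natCast_eq s i
  rcases lt_trichotomy t a with h | rfl | h
  · simp [hgap t h] at hi
  · rfl
  · obtain ⟨u, rfl⟩ := Nat.exists_eq_add_of_lt h
    rw [show s + ((a + u + 1 : ℕ) : ZMod n) - 1 = s + a + u by push_cast; ring,
      hblk u (by omega)] at hi1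
    simp at hi1

theorem add_add_two_le_of_runs {M : ZMod n → Bool} {p : ZMod n} {g b : ℕ} (hg : g ≠ 0)
    (hprev : M (p + 1) = true) (hgap : ∀ t < g, M (p + 2 + t) = false)
    (hblk : ∀ t < b, M (p + 2 + g + t) = true) (hend : M (p + 2 + g + b) = false)
    (hblocks : 2 ≤ {i | M i = true ∧ M (i - 1) = false}.ncard) : g + b + 2 ≤ n := by
  have hgn : g < n := by
    have := NeZero.pos n
    by_contra! h
    have := hgap (n - 1) (by omega)
    rw [natCast_eq_neg_of_add_eq (d := 1) (by omega),
      show p + 2 + -((1 : ℕ) : ZMod n) = p + 1 by push_cast; ring, hprev] at this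
    simp at this
  have hgbn : g + b ≤ n := by
    by_contra! h
    have := hblk (n - g) (by omega)
    rw [natCast_eq_neg_of_add_eq (c := n - g) (d := g) (by omega), add_neg_cancel_right] at this
    simpa [this] using hgap 0 (by omega)
  have hne : g + b ≠ n := fun h => by
    have := ncard_blockStarts_le_one h hgap hblk
    omega
  have hne1 : g + b + 1 ≠ n := fun h => by
    have := natCast_eq_neg_of_add_eq h
    push_cast at this
    rw [show p + 2 + g + b = p + 1 by linear_combination this, hprev] at hend
    simp at hend
  omega

end BlockStarts

/-- Connectability at `p`: `w` reads `1, 0, 0` at `p, p+1, p+2`, which already makes `p+2`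
unmatched. -/
def ConnectableAt {n : ℕ} (p : ZMod n) (w : ZMod n → Bool) : Prop :=
  w p = true ∧ w (p + 1) = false ∧ w (p + 2) = false

namespace ConnAt

variable {n : ℕ} {p : ZMod n} {x y : ZMod n → Bool}

theorem matchedB_add_one (hc : ConnAt p x y) : matchedB x (p + 1) = true := by
  obtain ⟨hxp, -⟩ := hc
  simp [matchedB, hxp]

theorem matchedB_add_two (hc : ConnAt p x y) : matchedB x (p + 2) = false := by
  obtain ⟨-, hxp1, hxp2, -⟩ := hc
  simp [matchedB, show p + 2 - 1 = p + 1 by ring, hxp1, hxp2]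

theorem matchedB_unshift_self (hc : ConnAt p x y) : matchedB (unshift y) p = false := by
  obtain ⟨-, -, -, hzp, hzpm1, -⟩ := hc
  simp [matchedB, hzp, hzpm1]

theorem matchedB_unshift_add_one (hc : ConnAt p x y) : matchedB (unshift y) (p + 1) = true := by
  obtain ⟨-, -, -, -, -, hzp1, -⟩ := hc
  simp [matchedB, hzp1]

theorem matchedB_unshift_add_two (hc : ConnAt p x y) : matchedB (unshift y) (p + 2) = true := by
  obtain ⟨-, -, -, -, -, hzp1, -⟩ := hc
  simp [matchedB, show p + 2 - 1 = p + 1 by ring, hzp1]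

theorem unshift_eq_of_ne (hc : ConnAt p x y) {i : ZMod n} (h0 : i ≠ p) (h1 : i ≠ p + 1) :
    unshift y i = x i := by
  obtain ⟨-, -, hxp2, -, -, -, hzp2, hagree⟩ := hc
  by_cases h2 : i = p + 2
  · rw [h2, hzp2, hxp2]
  · exact (hagree i h0 h1 h2).symm

theorem matchedB_unshift_eq (hc : ConnAt p x y) {j : ZMod n} (h0 : j ≠ p) (h2 : j ≠ p + 2) :
    matchedB (unshift y) j = matchedB x j := by
  by_cases h1 : j = p + 1
  · rw [h1, hc.matchedB_unshift_add_one, hc.matchedB_add_one]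
  · have h0' : j - 1 ≠ p := fun h => h1 (sub_eq_iff_eq_add.1 h)
    have h1' : j - 1 ≠ p + 1 := fun h => h2 (by rw [sub_eq_iff_eq_add.1 h]; ring)
    rw [matchedB, matchedB, hc.unshift_eq_of_ne h0 h1, hc.unshift_eq_of_ne h0' h1']

theorem matchedB_unshift_of_eq_true (hc : ConnAt p x y) {j : ZMod n} (h0 : j ≠ p)
    (h : matchedB x j = true) : matchedB (unshift y) j = true := by
  by_cases h2 : j = p + 2
  · rw [h2, hc.matchedB_unshift_add_two]
  · rwa [hc.matchedB_unshift_eq h0 h2]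

theorem matchedB_unshift_of_eq_false (hc : ConnAt p x y) {j : ZMod n} (h2 : j ≠ p + 2)
    (h : matchedB x j = false) : matchedB (unshift y) j = false := by
  by_cases h0 : j = p
  · rw [h0, hc.matchedB_unshift_self]
  · rwa [hc.matchedB_unshift_eq h0 h2]

variable {b : ℕ}

theorem tau_unshift_unshift (hc : ConnAt p x y) {g : ℕ} (hg : g ≠ 0) (hb : b ≠ 0)
    (hgbn : g + b + 3 ≤ n) (hgap : ∀ t < g + 1, matchedB x (p + 2 + t) = false)
    (hblk : ∀ t < b, matchedB x (p + 2 + (g + 1 : ℕ) + t) = true)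
    (hend : matchedB x (p + 2 + (g + 1 : ℕ) + b) = false) (r : List ℤ) :
    ConnectableAt p (unshift (unshift y)) ∧
      List.Lex (· < ·) (Pprof n (unshift (unshift y)) p)
        (-(b : ℤ) :: ((g + 1 : ℕ) : ℤ) :: r) := by
  have ⟨_, _, _, _, _, hzp1, hzp2, _⟩ := hc
  refine ⟨⟨hzp1, ?_, ?_⟩, ?_⟩
  · show unshift y (p + 1 + 1) = false
    rwa [show p + 1 + 1 = p + 2 by ring]
  · have h3 := hgap 1 (by omega)
    simp only [Nat.cast_one, matchedB, Bool.or_eq_false_iff] at h3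
    show unshift y (p + 2 + 1) = false
    rw [hc.unshift_eq_of_ne (ne_of_eq_add_natCast (c := 3) (by omega) (by omega) (by ring))
      (ne_of_eq_add_natCast (c := 2) (by omega) (by omega) (by push_cast; ring))]
    exact h3.1
  have hgap' : ∀ t < g, matchedB (unshift y) (p + 1 + 2 + t) = false := fun t ht => by
    rw [show p + 1 + 2 + (t : ZMod n) = p + 2 + ((t + 1 : ℕ) : ZMod n) by push_cast; ring]
    exact hc.matchedB_unshift_of_eq_false
      (ne_of_eq_add_natCast (by omega) (by omega) rfl) (hgap _ (by omega))
  have hblk' : ∀ t < b, matchedB (unshift y) (p + 1 + 2 + g + t) = true := fun t ht => by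
    rw [show p + 1 + 2 + (g : ZMod n) + t = p + 2 + ((g + 1 : ℕ) : ZMod n) + t by
      push_cast; ring]
    exact hc.matchedB_unshift_of_eq_true
      (ne_of_eq_add_natCast (c := g + t + 3) (by omega) (by omega) (by push_cast; ring))
      (hblk t ht)
  have hend' : matchedB (unshift y) (p + 1 + 2 + g + b) = false := by
    rw [show p + 1 + 2 + (g : ZMod n) + b = p + 2 + ((g + 1 : ℕ) : ZMod n) + b by
      push_cast; ring]
    exact hc.matchedB_unshift_of_eq_false
      (ne_of_eq_add_natCast (c := g + b + 1) (by omega) (by omega) (by push_cast; ring)) hend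
  have hprev' : matchedB (unshift y) (p + 1 + 1) = true := by
    rw [show p + 1 + 1 = p + 2 by ring]
    exact hc.matchedB_unshift_add_two
  obtain ⟨r', hr'⟩ := Pprof_eq_neg_cons_cons hg hb (by omega) hgap' hblk' hend' hprev'
  rw [show unshift (unshift y) = fun i => unshift y (i + 1) from rfl, Pprof_comp_add, hr']
  exact .cons (.rel (by omega))

theorem lex_Pprof_shift_iterate (hc : ConnAt p x y) {c : ℕ} (hcn : c + 3 < n)
    (hleft : ∀ t < c, matchedB x (p - 1 - t) = false) (hbn : b + 3 ≤ n)
    (hblk : ∀ t < b, matchedB x (p + 2 + 1 + t) = true)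
    (hend : matchedB x (p + 2 + 1 + b) = false) (r : List ℤ) :
    List.Lex (· < ·) (Pprof n (shift^[c + 1] y) p) (-(b : ℤ) :: r) := by
  set q := p + -((c + 1 + 1 : ℕ) : ZMod n)
  have hgap : ∀ t < c + 1, matchedB (unshift y) (q + 2 + t) = false := fun t ht => by
    rcases (Nat.lt_succ_iff.1 ht).eq_or_lt with rfl | ht
    · rw [show q + 2 + (t : ZMod n) = p by push_cast [q]; ring]
      exact hc.matchedB_unshift_self
    · obtain ⟨s, rfl⟩ := Nat.exists_eq_add_of_lt ht
      rw [show q + 2 + (t : ZMod n) = p - 1 - s by push_cast [q]; ring]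
      exact hc.matchedB_unshift_of_eq_false
        (ne_of_eq_add_natCast (c := s + 3) (by omega) (by omega) (by push_cast; ring)).symm
        (hleft s (by omega))
  have hblk' : ∀ t < b + 2, matchedB (unshift y) (q + 2 + (c + 1 : ℕ) + t) = true := by
    intro t ht
    rw [show q + 2 + ((c + 1 : ℕ) : ZMod n) + t = p + 1 + t by push_cast [q]; ring]
    match t, ht with
    | 0, _ => simpa using hc.matchedB_unshift_add_one
    | 1, _ =>
      rw [show p + 1 + ((1 : ℕ) : ZMod n) = p + 2 by push_cast; ring]
      exact hc.matchedB_unshift_add_two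
    | t + 2, ht =>
      rw [show p + 1 + ((t + 2 : ℕ) : ZMod n) = p + 2 + 1 + t by push_cast; ring]
      exact hc.matchedB_unshift_of_eq_true
        (ne_of_eq_add_natCast (c := t + 3) (by omega) (by omega) (by push_cast; ring))
        (hblk t (by omega))
  have hend' : matchedB (unshift y) (q + 2 + (c + 1 : ℕ) + (b + 2 : ℕ)) = false := by
    rw [show q + 2 + ((c + 1 : ℕ) : ZMod n) + ((b + 2 : ℕ) : ZMod n) = p + 2 + 1 + b by
      push_cast [q]; ring]
    exact hc.matchedB_unshift_of_eq_false
      (ne_of_eq_add_natCast (c := b + 1) (by omega) (by omega) (by push_cast; ring)) hend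
  have hprev : matchedB (unshift y) (q + 1 + (c + 1 : ℕ)) = false := by
    rw [show q + 1 + ((c + 1 : ℕ) : ZMod n) = p by push_cast [q]; ring]
    exact hc.matchedB_unshift_self
  obtain ⟨r', hr'⟩ := Pprof_eq_neg_cons (by omega) (by omega) hgap hblk' hend' hprev
  rw [shift_iterate_eq_comp_add, Pprof_comp_add, hr']
  exact .rel (by omega)

theorem tau_shift (hc : ConnAt p x y) (hx : ∀ i, x i = true → x (i + 1) = false) {β : ℕ}
    (hβ2 : 2 < β) (hβ : ∀ t < β, matchedB x (p + 1 - t) = true) (hb : b ≠ 0)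
    (hbn : b + 3 ≤ n) (hblk : ∀ t < b, matchedB x (p + 2 + 1 + t) = true)
    (hend : matchedB x (p + 2 + 1 + b) = false) (r : List ℤ) :
    ConnectableAt p (shift y) ∧ List.Lex (· < ·) (Pprof n (shift y) p) (-(b : ℤ) :: r) := by
  have ⟨hxp, _, _, hzp, hzpm1, _⟩ := hc
  refine ⟨⟨?_, ?_, ?_⟩, hc.lex_Pprof_shift_iterate (c := 0) (by omega) (by simp) hbn hblk hend r⟩
  · have hxm1 : x (p - 1) = false := by
      cases h : x (p - 1)
      · rfl
      · simpa [hxp] using hx _ h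
    have hx2 := hβ 2 hβ2
    rw [show p + 1 - ((2 : ℕ) : ZMod n) = p - 1 by push_cast; ring] at hx2
    simp only [matchedB, hxm1, Bool.false_or] at hx2
    have hz : unshift y (p - 1 - 1) = x (p - 1 - 1) := hc.unshift_eq_of_ne
      (ne_of_eq_add_natCast (c := 2) (by omega) (by omega) (by push_cast; ring)).symm
      (ne_of_eq_add_natCast (c := 3) (by omega) (by omega) (by push_cast; ring)).symm
    rw [← hx2, ← hz]
    show y (p - 1) = y (p - 1 - 1 + 1)
    rw [sub_add_cancel]
  · show y (p + 1 - 1) = false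
    rwa [show p + 1 - 1 = p - 1 + 1 by ring]
  · show y (p + 2 - 1) = false
    rwa [show p + 2 - 1 = p + 1 by ring]

theorem tau_shift_iterate (hc : ConnAt p x y) {γ : ℕ} (hγ1 : γ ≠ 0)
    (hγ : ∀ t < γ, matchedB x (p - 1 - t) = false) (hγend : matchedB x (p - 1 - γ) = true)
    (hb : b ≠ 0) (hbn : b + 3 ≤ n) (hblk : ∀ t < b, matchedB x (p + 2 + 1 + t) = true)
    (hend : matchedB x (p + 2 + 1 + b) = false) (r : List ℤ) :
    ConnectableAt p (shift^[γ + 1] y) ∧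
      List.Lex (· < ·) (Pprof n (shift^[γ + 1] y) p) (-(b : ℤ) :: r) := by
  have hγn : γ + 3 < n := by
    by_contra! h
    have := hγ (n - 4) (by omega)
    rw [natCast_eq_neg_of_add_eq (c := n - 4) (d := 4) (by omega),
      show p - 1 - -((4 : ℕ) : ZMod n) = p + 2 + 1 + ((0 : ℕ) : ZMod n) by push_cast; ring,
      hblk 0 (by omega)] at this
    simp at this
  refine ⟨?_, hc.lex_Pprof_shift_iterate hγn hγ hbn hblk hend r⟩
  obtain ⟨c, rfl⟩ := Nat.exists_eq_succ_of_ne_zero hγ1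
  have hx12 := hγ c (by omega)
  simp only [matchedB, Bool.or_eq_false_iff] at hx12 hγend
  have hx3 : x (p - 1 - c - 2) = true := by
    rw [show p - 1 - ((c + 1 : ℕ) : ZMod n) = p - 1 - c - 1 by push_cast; ring, hx12.2,
      Bool.false_or, show p - 1 - c - 1 - 1 = p - 1 - (c : ZMod n) - 2 by ring] at hγend
    exact hγend
  have hz : ∀ e : ℕ, e ≠ 0 → e + 1 < n → unshift y (p - e) = x (p - e) := fun e h0 h1 =>
    hc.unshift_eq_of_ne (ne_of_eq_add_natCast h0 (by omega) (by ring)).symm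
      (ne_of_eq_add_natCast (c := e + 1) (by omega) h1 (by push_cast; ring)).symm
  rw [shift_iterate_eq_comp_add]
  refine ⟨?_, ?_, ?_⟩
  · show unshift y (p + -((c + 1 + 1 + 1 : ℕ) : ZMod n)) = true
    rw [← sub_eq_add_neg, hz _ (by omega) (by omega)]
    rwa [show p - ((c + 1 + 1 + 1 : ℕ) : ZMod n) = p - 1 - c - 2 by push_cast; ring]
  · show unshift y (p + 1 + -((c + 1 + 1 + 1 : ℕ) : ZMod n)) = false
    rw [show p + 1 + -((c + 1 + 1 + 1 : ℕ) : ZMod n) = p - ((c + 2 : ℕ) : ZMod n) by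
      push_cast; ring, hz _ (by omega) (by omega)]
    rw [show p - ((c + 2 : ℕ) : ZMod n) = p - 1 - c - 1 by push_cast; ring]
    exact hx12.2
  · show unshift y (p + 2 + -((c + 1 + 1 + 1 : ℕ) : ZMod n)) = false
    rw [show p + 2 + -((c + 1 + 1 + 1 : ℕ) : ZMod n) = p - ((c + 1 : ℕ) : ZMod n) by
      push_cast; ring, hz _ (by omega) (by omega)]
    rw [show p - ((c + 1 : ℕ) : ZMod n) = p - 1 - c by push_cast; ring]
    exact hx12.1

end ConnAt

theorem tau_connectable_and_lex_decrease_general (n k : ℕ) (hn : 2 * k + 1 ≤ n)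
    (p : ZMod n) (x y : ZMod n → Bool)
    (hx : IsSchrijverVertex n k x) (hc : ConnAt p x y)
    (hblocks : 2 ≤ Set.ncard {i : ZMod n | matchedB x i = true ∧ matchedB x (i - 1) = false})
    (β γ γ' β' : ℕ)
    -- `β` is the length of the block of `x` ending at position `p+1`:
    (hβ2 : 2 ≤ β) (hβ : ∀ t : ℕ, t < β → matchedB x (p + 1 - (t : ZMod n)) = true)
    -- `γ` is the length of the gap immediately to the left of that block:
    (hγ1 : 1 ≤ γ)
    (hγ : ∀ t : ℕ, t < γ → matchedB x (p + 1 - (β : ZMod n) - (t : ZMod n)) = false)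
    (hγend : matchedB x (p + 1 - (β : ZMod n) - (γ : ZMod n)) = true)
    -- `γ'` and `β'` are the lengths of the gap and block immediately to the right:
    (hγ' : γ' = gapR n x p) (hβ' : β' = blkR n x p)
    (τy : ZMod n → Bool)
    (hτ : τy = if 1 < γ' then unshift (unshift y)
          else if 2 < β then shift y else shift^[γ + 1] y) :
    (τy p = true ∧ τy (p + 1) = false ∧ τy (p + 2) = false) ∧
    List.Lex (· < ·) (Pprof n τy p) (Pprof n x p) := by
  have : NeZero n := ⟨by omega⟩
  obtain ⟨hgap, hgapEnd⟩ := gapR_spec hc.matchedB_add_one hγ'.symm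
  obtain ⟨hblk, hblkEnd⟩ := blkR_spec hc.matchedB_add_two hγ'.symm hβ'.symm
  have hγ'0 : γ' ≠ 0 := by rintro rfl; simp [hc.matchedB_add_two] at hgapEnd
  have hβ'0 : β' ≠ 0 := by rintro rfl; simp [hgapEnd] at hblkEnd
  have hsum := add_add_two_le_of_runs hγ'0 hc.matchedB_add_one hgap hblk hblkEnd hblocks
  obtain ⟨r, hPx⟩ := Pprof_eq_neg_cons_cons hγ'0 hβ'0 (by omega) hgap hblk hblkEnd
    hc.matchedB_add_one
  rw [hPx]
  subst hτ
  split_ifs with h1 h2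
  · obtain ⟨g, rfl⟩ : ∃ g, γ' = g + 1 := ⟨γ' - 1, by omega⟩
    exact hc.tau_unshift_unshift (by omega) hβ'0 (by omega) hgap hblk hblkEnd r
  · obtain rfl : γ' = 1 := by omega
    simp only [Nat.cast_one] at hblk hblkEnd
    exact hc.tau_shift hx.2 h2 hβ hβ'0 (by omega) hblk hblkEnd _
  · obtain rfl : γ' = 1 := by omega
    obtain rfl : β = 2 := by omega
    simp only [Nat.cast_one] at hblk hblkEnd
    simp only [Nat.cast_ofNat, show p + 1 - 2 = p - 1 by ring] at hγ hγend
    exact hc.tau_shift_iterate (by omega) hγ hγend hβ'0 (by omega) hblk hblkEnd _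

/-- for a connectable vertex `x` of `S(n,k)` with at least two blocks and its
unique connector partner `y` in `U_p`, the vertex `τ(y)` (defined as `σ^{-2}(y)` if `γ' > 1`,
as `σ(y)` if `γ' = 1` and `β > 2`, and as `σ^{γ+1}(y)` if `γ' = 1` and `β = 2`) is again
connectable, and `P(τ(y))` is lexicographically strictly smaller than `P(x)`. -/
theorem tau_connectable_and_lex_decrease (n k : ℕ) (hk : 1 ≤ k) (hn : 2 * k + 1 ≤ n)
    (p : ZMod n) (x y : ZMod n → Bool)
    (hx : IsSchrijverVertex n k x) (hy : IsSchrijverVertex n k y) (hc : ConnAt p x y)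
    (hblocks : 2 ≤ Set.ncard {i : ZMod n | matchedB x i = true ∧ matchedB x (i - 1) = false})
    (β γ γ' β' : ℕ)
    -- `β` is the length of the block of `x` ending at position `p+1`:
    (hβ2 : 2 ≤ β) (hβ : ∀ t : ℕ, t < β → matchedB x (p + 1 - (t : ZMod n)) = true)
    (hβend : matchedB x (p + 1 - (β : ZMod n)) = false)
    -- `γ` is the length of the gap immediately to the left of that block:
    (hγ1 : 1 ≤ γ)
    (hγ : ∀ t : ℕ, t < γ → matchedB x (p + 1 - (β : ZMod n) - (t : ZMod n)) = false)
    (hγend : matchedB x (p + 1 - (β : ZMod n) - (γ : ZMod n)) = true)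
    -- `γ'` and `β'` are the lengths of the gap and block immediately to the right:
    (hγ' : γ' = gapR n x p) (hβ' : β' = blkR n x p)
    (τy : ZMod n → Bool)
    (hτ : τy = if 1 < γ' then unshift (unshift y)
          else if 2 < β then shift y else shift^[γ + 1] y) :
    (τy p = true ∧ τy (p + 1) = false ∧ τy (p + 2) = false) ∧
    List.Lex (· < ·) (Pprof n τy p) (Pprof n x p) :=
  tau_connectable_and_lex_decrease_general n k hn p x y hx hc hblocks β γ γ' β' hβ2 hβ hγ1 hγ hγend
    hγ' hβ' τy hτ
end
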